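/- arXiv:2604.03407 — 4 statements merged into one kernel-verified Lean document; each statement's English description precedes it below -/
import Mathlib

section
/- Let f : ℝⁿ → ℝⁿ be Lipschitz with constant ℓ_f and, for j = 1, …, m, let g_j : ℝⁿ → ℝⁿ be Lipschitz with constant ℓ_j. Let u_1, …, u_m ∈ ℝ with |u_j| ≤ M_j for nonnegative constants M_j, and set ℓ_sys = ℓ_f + Σ_{j=1}^m ℓ_j·M_j, assumed positive. If x : ℝ → ℝⁿ is differentiable on [t₀, t₀ + T] (T ≥ 0) and satisfies ẋ(t) = f(x(t)) + Σ_{j=1}^m g_j(x(t))·u_j for all t ∈ [t₀, t₀ + T], then for every t ∈ [t₀, t₀ + T]: ‖x(t) − x(t₀)‖ ≤ ‖ẋ(t₀)‖·(e^{ℓ_sys·(t − t₀)} − 1)/ℓ_sys. -/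
/-- State-drift bound for a control-affine system under a zero-order-hold input:
if `f` is `ℓ_f`-Lipschitz, each `g j` is `ℓ j`-Lipschitz, `|u j| ≤ M j` with `M j ≥ 0`,
`ℓ_sys = ℓ_f + Σ_j ℓ_j M_j > 0`, and `x` solves `ẋ = f(x) + Σ_j g_j(x)·u_j` on
`[t₀, t₀ + T]`, then `‖x t − x t₀‖ ≤ ‖ẋ(t₀)‖·(exp (ℓ_sys (t − t₀)) − 1)/ℓ_sys`. -/
theorem stmt_2 (n m : ℕ)
    (f : EuclideanSpace ℝ (Fin n) → EuclideanSpace ℝ (Fin n)) (ℓf : ℝ)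
    (hf : ∀ y z, ‖f y - f z‖ ≤ ℓf * ‖y - z‖)
    (g : Fin m → EuclideanSpace ℝ (Fin n) → EuclideanSpace ℝ (Fin n)) (ℓg : Fin m → ℝ)
    (hg : ∀ j y z, ‖g j y - g j z‖ ≤ ℓg j * ‖y - z‖)
    (u : Fin m → ℝ) (M : Fin m → ℝ) (hM : ∀ j, 0 ≤ M j) (hu : ∀ j, |u j| ≤ M j)
    (hsys : 0 < ℓf + ∑ j, ℓg j * M j)
    (t₀ T : ℝ) (hT : 0 ≤ T)
    (x : ℝ → EuclideanSpace ℝ (Fin n))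
    (hx : ∀ t ∈ Set.Icc t₀ (t₀ + T),
      HasDerivWithinAt x (f (x t) + ∑ j, u j • g j (x t)) (Set.Icc t₀ (t₀ + T)) t) :
    ∀ t ∈ Set.Icc t₀ (t₀ + T),
      ‖x t - x t₀‖ ≤ ‖f (x t₀) + ∑ j, u j • g j (x t₀)‖ *
        (Real.exp ((ℓf + ∑ j, ℓg j * M j) * (t - t₀)) - 1) / (ℓf + ∑ j, ℓg j * M j) := by
  set K : ℝ := ℓf + ∑ j, ℓg j * M j with hK
  set F : EuclideanSpace ℝ (Fin n) → EuclideanSpace ℝ (Fin n) :=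
    fun y => f y + ∑ j, u j • g j y with hF
  -- the vector field is K-Lipschitz
  have hFlip : ∀ y z, ‖F y - F z‖ ≤ K * ‖y - z‖ := by
    intro y z
    have h1 : F y - F z = (f y - f z) + ∑ j, u j • (g j y - g j z) := by
      simp only [hF, smul_sub, Finset.sum_sub_distrib]
      abel
    rw [h1]
    calc ‖(f y - f z) + ∑ j, u j • (g j y - g j z)‖
        ≤ ‖f y - f z‖ + ∑ j, ‖u j • (g j y - g j z)‖ :=
          norm_add_le_of_le le_rfl (norm_sum_le _ _)
      _ ≤ ℓf * ‖y - z‖ + ∑ j, (ℓg j * M j) * ‖y - z‖ := by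
          gcongr with j hj
          · exact hf y z
          · rw [norm_smul]
            have h2 : ‖g j y - g j z‖ ≤ ℓg j * ‖y - z‖ := hg j y z
            have h3 : 0 ≤ ℓg j * ‖y - z‖ := le_trans (norm_nonneg _) h2
            calc ‖u j‖ * ‖g j y - g j z‖ ≤ M j * (ℓg j * ‖y - z‖) := by
                  exact mul_le_mul (by simpa using hu j) h2 (norm_nonneg _) (hM j)
              _ = (ℓg j * M j) * ‖y - z‖ := by ring
      _ = K * ‖y - z‖ := by rw [hK, ← Finset.sum_mul]; ring
  set ε : ℝ := ‖F (x t₀)‖ with hε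
  have key : ∀ t ∈ Set.Icc t₀ (t₀ + T),
      ‖x t - x t₀‖ ≤ gronwallBound 0 K ε (t - t₀) := by
    apply norm_le_gronwallBound_of_norm_deriv_right_le
      (f' := fun t => F (x t))
    · intro t ht
      exact ((hx t ht).sub_const _).continuousWithinAt
    · intro t ht
      have hmem : Set.Icc t₀ (t₀ + T) ∈ nhdsWithin t (Set.Ici t) :=
        Icc_mem_nhdsGE_of_mem ht
      exact (((hx t (Set.Ico_subset_Icc_self ht)).sub_const _).mono_of_mem_nhdsWithin hmem)
    · simp
    · intro t ht
      have := hFlip (x t) (x t₀)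
      calc ‖F (x t)‖ ≤ ‖F (x t) - F (x t₀)‖ + ‖F (x t₀)‖ := by
            simpa using norm_add_le (F (x t) - F (x t₀)) (F (x t₀))
        _ ≤ K * ‖x t - x t₀‖ + ε := by rw [hε]; gcongr
  intro t ht
  have h := key t ht
  rw [gronwallBound_of_K_ne_0 (ne_of_gt hsys)] at h
  calc ‖x t - x t₀‖ ≤ 0 * Real.exp (K * (t - t₀)) + ε / K * (Real.exp (K * (t - t₀)) - 1) := h
    _ = ε * (Real.exp (K * (t - t₀)) - 1) / K := by ring
end

section
/- Let l ≥ 2, μ > 0, and λ > 0. Let Ψ : ℝ^{l−1} → ℝ and k : ℝ^{l−1} → ℝ be continuously differentiable, and suppose that at a point z = (η_1, …, η_l) ∈ ℝ^l, writing z' = (η_1, …, η_{l−1}), the virtual closed-loop inequality Σ_{s=1}^{l−2} (∂Ψ/∂η_s)(z')·η_{s+1} + (∂Ψ/∂η_{l−1})(z')·k(z') ≥ λ·Ψ(z') holds. Define Ψ̂ : ℝ^l → ℝ by Ψ̂(z) = Ψ(z') − (1/(2μ))·(η_l − k(z'))² and define k̂(z) = μ·(∂Ψ/∂η_{l−1})(z')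 + Σ_{s=1}^{l−1} (∂k/∂η_s)(z')·η_{s+1} + (λ/2)·(η_l − k(z')). Then Σ_{s=1}^{l−1} (∂Ψ̂/∂η_s)(z)·η_{s+1} + (∂Ψ̂/∂η_l)(z)·k̂(z) ≥ λ·Ψ̂(z). -/
/-!
Write `ε = η_{n+2} − k(η_1, …, η_{n+1})`. The partial derivatives of `Ψ̂` are `∂_sΨ + (ε/μ) ∂_s k`
in the first `n + 1` coordinates and `−ε/μ` in the last one. Along the chain driven by `k̂`, the
`∂k` terms cancel against the middle summand of `k̂`, and the summand `μ ∂_{n+1}Ψ` of `k̂` turns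
`∂_{n+1}Ψ · η_{n+2}` into `∂_{n+1}Ψ · k`. What remains is the derivative of `Ψ` under `k` minus
`(λ/2μ) ε²`, and the latter is exactly `λ` times the penalty subtracted in `Ψ̂`.
-/

open Fin

namespace Fin

def initCLM (R : Type*) [Semiring R] [TopologicalSpace R] (n : ℕ) :
    (Fin (n + 1) → R) →L[R] (Fin n → R) :=
  ContinuousLinearMap.pi fun i => ContinuousLinearMap.proj i.castSucc

@[simp]
theorem initCLM_apply {R : Type*} [Semiring R] [TopologicalSpace R] {n : ℕ}
    (q : Fin (n + 1) → R) : initCLM R n q = init q := rfl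

variable {M : Type*} [Zero M] {n : ℕ}

theorem init_single_castSucc (i : Fin n) (a : M) :
    init (Pi.single i.castSucc a : Fin (n + 1) → M) = Pi.single i a := by
  ext j
  simp [init, Pi.single_apply, castSucc_inj]

theorem init_single_last (a : M) : init (Pi.single (last n) a : Fin (n + 1) → M) = 0 := by
  ext j
  simp [init, castSucc_ne_last]

end Fin

section Backstepping

variable {n : ℕ}

/-- Derivative of `V` at `η` along the integrator chain `η̇_s = η_{s+1}`, `η̇_{n+1} = u`. -/
noncomputable def chainDeriv (V : (Fin (n + 1) → ℝ) → ℝ) (η : Fin (n + 1) → ℝ) (u : ℝ) : ℝ :=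
  ∑ s : Fin n, fderiv ℝ V η (Pi.single s.castSucc 1) * η s.succ
    + fderiv ℝ V η (Pi.single (last n) 1) * u

noncomputable def backstepBarrier (μ : ℝ) (Ψ k : (Fin (n + 1) → ℝ) → ℝ) (η : Fin (n + 2) → ℝ) :
    ℝ :=
  Ψ (init η) - 1 / (2 * μ) * (η (last _) - k (init η)) ^ 2

noncomputable def backstepControl (μ lam : ℝ) (Ψ k : (Fin (n + 1) → ℝ) → ℝ)
    (η : Fin (n + 2) → ℝ) : ℝ :=
  μ * fderiv ℝ Ψ (init η) (Pi.single (last n) 1)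
    + ∑ s : Fin (n + 1), fderiv ℝ k (init η) (Pi.single s 1) * η s.succ
    + lam / 2 * (η (last _) - k (init η))

variable {μ lam : ℝ} {Ψ k : (Fin (n + 1) → ℝ) → ℝ} {η : Fin (n + 2) → ℝ}

theorem fderiv_backstepBarrier_apply (hΨ : DifferentiableAt ℝ Ψ (init η))
    (hk : DifferentiableAt ℝ k (init η)) (v : Fin (n + 2) → ℝ) :
    fderiv ℝ (backstepBarrier μ Ψ k) η v = fderiv ℝ Ψ (init η) (init v)
      - (η (last _) - k (init η)) / μ * (v (last _) - fderiv ℝ k (init η) (init v)) := by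
  have hinit : HasFDerivAt (init : (Fin (n + 2) → ℝ) → _) (initCLM ℝ (n + 1)) η :=
    (initCLM ℝ (n + 1)).hasFDerivAt
  have herr := (hasFDerivAt_apply (last _) η).sub (hk.hasFDerivAt.comp η hinit)
  have hbar : HasFDerivAt (backstepBarrier μ Ψ k) _ η :=
    (hΨ.hasFDerivAt.comp η hinit).sub ((herr.pow 2).const_mul (1 / (2 * μ)))
  rw [hbar.fderiv]
  simp only [Pi.sub_apply, Function.comp_apply, Nat.add_one_sub_one, pow_one, nsmul_eq_mul,
    Nat.cast_ofNat, sub_apply, ContinuousLinearMap.comp_apply, initCLM_apply,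
    smul_apply, ContinuousLinearMap.proj_apply, smul_eq_mul]
  ring

theorem fderiv_backstepBarrier_single_castSucc (hΨ : DifferentiableAt ℝ Ψ (init η))
    (hk : DifferentiableAt ℝ k (init η)) (s : Fin (n + 1)) :
    fderiv ℝ (backstepBarrier μ Ψ k) η (Pi.single s.castSucc 1)
      = fderiv ℝ Ψ (init η) (Pi.single s 1)
        + (η (last _) - k (init η)) / μ * fderiv ℝ k (init η) (Pi.single s 1) := by
  rw [fderiv_backstepBarrier_apply hΨ hk, init_single_castSucc,
    Pi.single_eq_of_ne' (castSucc_ne_last s)]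
  ring

theorem fderiv_backstepBarrier_single_last (hΨ : DifferentiableAt ℝ Ψ (init η))
    (hk : DifferentiableAt ℝ k (init η)) :
    fderiv ℝ (backstepBarrier μ Ψ k) η (Pi.single (last _) 1)
      = -((η (last _) - k (init η)) / μ) := by
  rw [fderiv_backstepBarrier_apply hΨ hk, init_single_last, Pi.single_eq_same, map_zero, map_zero]
  ring

theorem chainDeriv_backstepBarrier (hμ : μ ≠ 0) (hΨ : DifferentiableAt ℝ Ψ (init η))
    (hk : DifferentiableAt ℝ k (init η)) :
    chainDeriv (backstepBarrier μ Ψ k) η (backstepControl μ lam Ψ k η)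
      = chainDeriv Ψ (init η) (k (init η)) - lam / (2 * μ) * (η (last _) - k (init η)) ^ 2 := by
  set ε := η (last _) - k (init η) with hε
  have hΨsum : ∑ s : Fin (n + 1), fderiv ℝ Ψ (init η) (Pi.single s 1) * η s.succ
      = ∑ s : Fin n, fderiv ℝ Ψ (init η) (Pi.single s.castSucc 1) * init η s.succ
        + fderiv ℝ Ψ (init η) (Pi.single (last n) 1) * (ε + k (init η)) := by
    rw [Fin.sum_univ_castSucc, hε, sub_add_cancel]
    rfl
  simp only [chainDeriv, backstepControl, fderiv_backstepBarrier_single_castSucc hΨ hk,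
    fderiv_backstepBarrier_single_last hΨ hk, ← hε, add_mul, Finset.sum_add_distrib, hΨsum,
    mul_assoc, ← Finset.mul_sum]
  field_simp
  ring

theorem le_chainDeriv_backstepBarrier (hμ : μ ≠ 0) (hΨ : DifferentiableAt ℝ Ψ (init η))
    (hk : DifferentiableAt ℝ k (init η))
    (hineq : lam * Ψ (init η) ≤ chainDeriv Ψ (init η) (k (init η))) :
    lam * backstepBarrier μ Ψ k η
      ≤ chainDeriv (backstepBarrier μ Ψ k) η (backstepControl μ lam Ψ k η) := by
  have hexpand : lam * backstepBarrier μ Ψ k η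
      = lam * Ψ (init η) - lam / (2 * μ) * (η (last _) - k (init η)) ^ 2 := by
    rw [backstepBarrier]
    ring
  rw [chainDeriv_backstepBarrier hμ hΨ hk, hexpand]
  linarith

end Backstepping

/-- Single backstepping step for the integrator chain `η̇_s = η_{s+1}`: if the
guidance-barrier inequality with rate `λ` holds for `Ψ` under the virtual controller
`k` at level `l−1` (evaluated at `z' = (η_1,…,η_{l−1})`), then the augmented function
`Ψ̂(z) = Ψ(z') − (1/(2μ))(η_l − k(z'))²` satisfies the same inequality at level `l`
under the new virtual controller
`k̂(z) = μ·∂Ψ/∂η_{l−1}(z') + Σ_{s=1}^{l−1} ∂k/∂η_s(z')·η_{s+1} + (λ/2)(η_l − k(z'))`. -/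
theorem stmt_11 (l : ℕ) (hl : 2 ≤ l) (μ lam : ℝ) (hμ : 0 < μ)
    (Ψ k : (Fin (l - 1) → ℝ) → ℝ) (hΨ : ContDiff ℝ 1 Ψ) (hk : ContDiff ℝ 1 k)
    (z : Fin l → ℝ) (z' : Fin (l - 1) → ℝ)
    (hz' : z' = fun i => z ⟨i.val, by have := i.isLt; omega⟩)
    (hineq : (∑ s : Fin (l - 2),
        fderiv ℝ Ψ z' (Pi.single ⟨s.val, by have := s.isLt; omega⟩ 1) *
          z' ⟨s.val + 1, by have := s.isLt; omega⟩)
      + fderiv ℝ Ψ z' (Pi.single ⟨l - 2, by omega⟩ 1) * k z' ≥ lam * Ψ z')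
    (Ψhat : (Fin l → ℝ) → ℝ)
    (hΨhat : ∀ w : Fin l → ℝ, Ψhat w =
      Ψ (fun i => w ⟨i.val, by have := i.isLt; omega⟩) -
        (1 / (2 * μ)) *
          (w ⟨l - 1, by omega⟩ - k (fun i => w ⟨i.val, by have := i.isLt; omega⟩)) ^ 2)
    (khat : ℝ)
    (hkhat : khat =
      μ * fderiv ℝ Ψ z' (Pi.single ⟨l - 2, by omega⟩ 1)
      + (∑ s : Fin (l - 1),
          fderiv ℝ k z' (Pi.single s 1) * z ⟨s.val + 1, by have := s.isLt; omega⟩)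
      + (lam / 2) * (z ⟨l - 1, by omega⟩ - k z')) :
    (∑ s : Fin (l - 1),
        fderiv ℝ Ψhat z (Pi.single ⟨s.val, by have := s.isLt; omega⟩ 1) *
          z ⟨s.val + 1, by have := s.isLt; omega⟩)
      + fderiv ℝ Ψhat z (Pi.single ⟨l - 1, by omega⟩ 1) * khat ≥ lam * Ψhat z := by
  obtain ⟨m, rfl⟩ : ∃ m, l = m + 2 := ⟨l - 2, by omega⟩
  obtain rfl : Ψhat = backstepBarrier μ Ψ k := funext hΨhat
  subst hz' hkhat
  exact le_chainDeriv_backstepBarrier hμ.ne' (hΨ.differentiable one_ne_zero _)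
    (hk.differentiable one_ne_zero _) hineq
end

section
/- Let n, m ∈ ℕ and λ > 0. Let f : ℝⁿ → ℝⁿ be Lipschitz with constant ℓ_f and, for j = 1, …, m, let g_j : ℝⁿ → ℝⁿ be Lipschitz with constant ℓ_j and let u_j : ℝⁿ → ℝ be Lipschitz with constant L_j and satisfy |u_j(y)| ≤ M_j for all y; set ℓ_sys = ℓ_f + Σ_j ℓ_j·M_j and assume ℓ_sys > 0. Let Ψ : ℝⁿ → ℝ be continuously differentiable with |∇Ψ(y)·g_j(y)| ≤ M_{g_j} for all y and each j, and suppose Ψ(y) ≤ M_Ψ for all y ∈ ℝⁿ. Suppose there is D > 0 with ‖f(y) + Σ_j g_j(y)·u_j(z)‖ ≤ D for all y, z ∈ ℝⁿ. Let φ : ℝⁿ → ℝ be continuous, and assume ∇Ψ(y)·( f(y) + Σ_j g_j(y)·u_j(y) ) ≥ λ·Ψ(y) for every y with Ψ(y) ≥ 0 and φ(y) ≥ 0. Then for every x₀ ∈ ℝⁿ with Ψ(x₀) > 0 there exists T* > 0 such that for every T ∈ (0, T*) the following holds: if x : [0, ∞) → ℝⁿ is continuous with x(0) = x₀ and, for every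 k ∈ ℕ, x is differentiable on [kT, (k+1)T] with ẋ(t) = f(x(t)) + Σ_j g_j(x(t))·u_j(x(kT)) for all t in that interval, then there exists τ ≥ 0 with φ(x(τ)) ≤ 0 and Ψ(x(t)) > 0 for all t ∈ [0, τ]. -/
/-!
Along a sample interval the state moves by at most `D T`, so the held control differs from the
current feedback value by `O(T)`. Hence, wherever `Ψ ≥ Ψ(x₀)` and `φ ≥ 0`, the derivative of
`Ψ ∘ x` is at least `λ Ψ(x₀) - O(T) > λ Ψ(x₀) / 2` for small `T`. A fencing argument then keeps
`Ψ(x t)` above the line `Ψ(x₀) + λ Ψ(x₀) t / 2` until `φ` first becomes nonpositive, and since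
`Ψ` is bounded above, this must happen in finite time.
-/

open Set

theorem add_mul_sub_le_of_deriv_right_gt {h : ℝ → ℝ} {a b δ : ℝ}
    (hh : ContinuousOn h (Icc a b))
    (hderiv : ∀ t ∈ Ico a b, ∃ d, HasDerivWithinAt h d (Ici t) t ∧
      (h t = h a + δ * (t - a) → δ < d)) :
    ∀ t ∈ Icc a b, h a + δ * (t - a) ≤ h t := by
  choose! d hd hbound using hderiv
  refine image_le_of_deriv_right_lt_deriv_boundary' (f' := fun _ => δ) (by fun_prop)
    (fun t _ => ?_) (by simp) hh hd (fun t ht heq => hbound t ht heq.symm)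
  simpa using ((hasDerivWithinAt_id t (Ici t)).sub_const a).const_mul δ |>.const_add (h a)

theorem exists_first_nonpos {p : ℝ → ℝ} {a s : ℝ} (hp : ContinuousOn p (Icc a s))
    (has : a ≤ s) (hs : p s ≤ 0) :
    ∃ τ ∈ Icc a s, p τ ≤ 0 ∧ ∀ t ∈ Ico a τ, 0 < p t := by
  have hclosed : IsClosed (Icc a s ∩ p ⁻¹' Iic 0) :=
    hp.preimage_isClosed_of_isClosed isClosed_Icc isClosed_Iic
  obtain ⟨τ, ⟨hτ, hpτ⟩, hleast⟩ := (isCompact_Icc.of_isClosed_subset hclosed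
    inter_subset_left).exists_isLeast ⟨s, right_mem_Icc.mpr has, hs⟩
  refine ⟨τ, hτ, hpτ, fun t ht => ?_⟩
  by_contra! hpt
  exact (hleast ⟨⟨ht.1, ht.2.le.trans hτ.2⟩, hpt⟩).not_gt ht.2

theorem exists_first_nonpos_of_deriv_right_gt {h p : ℝ → ℝ} {δ M : ℝ} (hδ : 0 < δ)
    (hh : ContinuousOn h (Ici 0)) (hp : ContinuousOn p (Ici 0)) (hM : ∀ t, h t ≤ M)
    (hrate : ∀ t ≥ 0, ∃ d, HasDerivWithinAt h d (Ici t) t ∧ (h 0 ≤ h t → 0 ≤ p t → δ < d)) :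
    ∃ τ ≥ 0, p τ ≤ 0 ∧ ∀ t ∈ Icc 0 τ, h 0 + δ * t ≤ h t := by
  have hgrowth : ∀ b, (∀ t ∈ Ico 0 b, 0 ≤ p t) → ∀ t ∈ Icc 0 b, h 0 + δ * t ≤ h t := by
    intro b hpb t ht
    have := add_mul_sub_le_of_deriv_right_gt (δ := δ) (hh.mono Icc_subset_Ici_self)
      (fun s hs => ?_) t ht
    · simpa using this
    obtain ⟨d, hd, hbound⟩ := hrate s hs.1
    exact ⟨d, hd, fun heq => hbound (by nlinarith [hs.1]) (hpb s hs)⟩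
  obtain ⟨s, hs0, hs⟩ : ∃ s ≥ 0, p s ≤ 0 := by
    by_contra! hpos
    set b := (M - h 0) / δ + 1
    have hb : 0 ≤ b := by linarith [div_nonneg (sub_nonneg.2 (hM 0)) hδ.le]
    have := hgrowth b (fun t ht => (hpos t ht.1).le) b ⟨hb, le_rfl⟩
    have : δ * b = M - h 0 + δ := by rw [mul_add, mul_div_cancel₀ _ hδ.ne', mul_one]
    linarith [hM b]
  obtain ⟨τ, hτ, hpτ, hpos⟩ := exists_first_nonpos (hp.mono Icc_subset_Ici_self) hs0 hs
  exact ⟨τ, hτ.1, hpτ, hgrowth τ fun t ht => (hpos t ht).le⟩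

theorem exists_nat_mem_Ico_mul {T t : ℝ} (hT : 0 < T) (ht : 0 ≤ t) :
    ∃ k : ℕ, t ∈ Ico ((k : ℝ) * T) (((k : ℝ) + 1) * T) := by
  refine ⟨⌊t / T⌋₊, ?_, ?_⟩
  · exact (le_div_iff₀ hT).mp (Nat.floor_le (div_nonneg ht hT.le))
  · exact (div_lt_iff₀ hT).mp (Nat.lt_floor_add_one _)

section SampledData

variable {E : Type*} [NormedAddCommGroup E] [NormedSpace ℝ E]

-- `max (L j) 0` rather than `L j`: on the trivial space a negative Lipschitz constant is allowed.
theorem fderiv_feedback_sub_le_fderiv_held {ι : Type*} [Fintype ι] (Ψ : E → ℝ) (f : E → E)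
    (g : ι → E → E) (u : ι → E → ℝ) {L Mg : ι → ℝ}
    (hu : ∀ j y z, |u j y - u j z| ≤ L j * ‖y - z‖)
    (hMg : ∀ j y, |fderiv ℝ Ψ y (g j y)| ≤ Mg j) (y z : E) :
    fderiv ℝ Ψ y (f y + ∑ j, u j y • g j y) - (∑ j, max (L j) 0 * Mg j) * ‖z - y‖ ≤
      fderiv ℝ Ψ y (f y + ∑ j, u j z • g j y) := by
  have hsplit : fderiv ℝ Ψ y (f y + ∑ j, u j z • g j y) = fderiv ℝ Ψ y (f y + ∑ j, u j y • g j y)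
      + ∑ j, (u j z - u j y) * fderiv ℝ Ψ y (g j y) := by
    simp only [map_add, map_sum, map_smul, smul_eq_mul, sub_mul, Finset.sum_sub_distrib]
    ring
  have herr : -((∑ j, max (L j) 0 * Mg j) * ‖z - y‖) ≤
      ∑ j, (u j z - u j y) * fderiv ℝ Ψ y (g j y) := by
    rw [Finset.sum_mul, ← Finset.sum_neg_distrib]
    gcongr with j
    have hdu : |u j z - u j y| ≤ max (L j) 0 * ‖z - y‖ :=
      (hu j z y).trans (by gcongr; exact le_max_left _ _)
    calc -(max (L j) 0 * Mg j * ‖z - y‖)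
        ≤ -(|u j z - u j y| * |fderiv ℝ Ψ y (g j y)|) := by
          rw [mul_right_comm]
          exact neg_le_neg (mul_le_mul hdu (hMg j y) (abs_nonneg _) (by positivity))
      _ ≤ (u j z - u j y) * fderiv ℝ Ψ y (g j y) := by
          rw [← abs_mul]
          exact neg_abs_le _
  linarith

variable {F : E → E → E} {x : ℝ → E} {T : ℝ}

-- `F y z` is the closed-loop vector field at state `y` with the control computed at sample `z`.
def IsSampledDataSolution (F : E → E → E) (T : ℝ) (x : ℝ → E) : Prop :=
  ∀ k : ℕ, ∀ t ∈ Icc ((k : ℝ) * T) (((k : ℝ) + 1) * T),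
    HasDerivWithinAt x (F (x t) (x ((k : ℝ) * T))) (Icc ((k : ℝ) * T) (((k : ℝ) + 1) * T)) t

theorem IsSampledDataSolution.exists_hasDerivWithinAt_Ici (hx : IsSampledDataSolution F T x)
    (hT : 0 < T) {t : ℝ} (ht : 0 ≤ t) :
    ∃ k : ℕ, t ∈ Ico ((k : ℝ) * T) (((k : ℝ) + 1) * T) ∧
      HasDerivWithinAt x (F (x t) (x ((k : ℝ) * T))) (Ici t) t := by
  obtain ⟨k, hk⟩ := exists_nat_mem_Ico_mul hT ht
  exact ⟨k, hk, (hx k t (Ico_subset_Icc_self hk)).mono_of_mem_nhdsWithin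
    (Icc_mem_nhdsGE_of_mem hk)⟩

theorem IsSampledDataSolution.norm_sub_sample_le (hx : IsSampledDataSolution F T x) {D : ℝ}
    (hF : ∀ y z, ‖F y z‖ ≤ D) (k : ℕ) {t : ℝ} (ht : t ∈ Icc ((k : ℝ) * T) (((k : ℝ) + 1) * T)) :
    ‖x t - x ((k : ℝ) * T)‖ ≤ D * T :=
  calc ‖x t - x ((k : ℝ) * T)‖ ≤ D * (t - k * T) :=
        norm_image_sub_le_of_norm_deriv_le_segment' (hx k) (fun _ _ => hF _ _) t ht
    _ ≤ D * T := by
        gcongr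
        · exact (norm_nonneg _).trans (hF 0 0)
        · linarith [ht.2]

theorem IsSampledDataSolution.exists_hasDerivWithinAt_barrier_ge {ι : Type*} [Fintype ι]
    {f : E → E} {g : ι → E → E} {u : ι → E → ℝ} {Ψ φ : E → ℝ} {L Mg : ι → ℝ} {lam D c : ℝ}
    (hx : IsSampledDataSolution (fun y z => f y + ∑ j, u j z • g j y) T x) (hT : 0 < T)
    (hΨ : Differentiable ℝ Ψ) (hu : ∀ j y z, |u j y - u j z| ≤ L j * ‖y - z‖)
    (hMg : ∀ j y, |fderiv ℝ Ψ y (g j y)| ≤ Mg j) (hD : ∀ y z, ‖f y + ∑ j, u j z • g j y‖ ≤ D)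
    (hlam : 0 ≤ lam) (hguide : ∀ y, 0 ≤ Ψ y → 0 ≤ φ y →
      fderiv ℝ Ψ y (f y + ∑ j, u j y • g j y) ≥ lam * Ψ y)
    (hc : 0 ≤ c) {t : ℝ} (ht : 0 ≤ t) :
    ∃ d, HasDerivWithinAt (fun s => Ψ (x s)) d (Ici t) t ∧ (c ≤ Ψ (x t) → 0 ≤ φ (x t) →
      lam * c - (∑ j, max (L j) 0 * Mg j) * (D * T) ≤ d) := by
  obtain ⟨k, hk, hx'⟩ := hx.exists_hasDerivWithinAt_Ici hT ht
  refine ⟨_, (hΨ (x t)).hasFDerivAt.comp_hasDerivWithinAt t hx', fun hct hφt => ?_⟩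
  have hC : 0 ≤ ∑ j, max (L j) 0 * Mg j := Finset.sum_nonneg fun j _ =>
    mul_nonneg (le_max_right _ _) ((abs_nonneg _).trans (hMg j 0))
  have hdisp : ‖x (k * T) - x t‖ ≤ D * T := by
    rw [norm_sub_rev]
    exact hx.norm_sub_sample_le hD k (Ico_subset_Icc_self hk)
  have hpert := fderiv_feedback_sub_le_fderiv_held Ψ f g u hu hMg (x t) (x (k * T))
  have hguide_t := hguide (x t) (hc.trans hct) hφt
  have := mul_le_mul_of_nonneg_left hct hlam
  have := mul_le_mul_of_nonneg_left hdisp hC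
  linarith

end SampledData

theorem stmt_13_general (n m : ℕ) (lam : ℝ) (hlam : 0 < lam)
    (f : EuclideanSpace ℝ (Fin n) → EuclideanSpace ℝ (Fin n))
    (g : Fin m → EuclideanSpace ℝ (Fin n) → EuclideanSpace ℝ (Fin n))
    (u : Fin m → EuclideanSpace ℝ (Fin n) → ℝ) (L : Fin m → ℝ)
    (hu : ∀ j y z, |u j y - u j z| ≤ L j * ‖y - z‖)
    (Ψ : EuclideanSpace ℝ (Fin n) → ℝ) (hΨ : ContDiff ℝ 1 Ψ)
    (Mg : Fin m → ℝ) (hMg : ∀ j y, |fderiv ℝ Ψ y (g j y)| ≤ Mg j)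
    (MΨ : ℝ) (hMΨ : ∀ y, Ψ y ≤ MΨ)
    (D : ℝ)
    (hDbound : ∀ y z, ‖f y + ∑ j, u j z • g j y‖ ≤ D)
    (φ : EuclideanSpace ℝ (Fin n) → ℝ) (hφ : Continuous φ)
    (hguide : ∀ y, 0 ≤ Ψ y → 0 ≤ φ y →
      fderiv ℝ Ψ y (f y + ∑ j, u j y • g j y) ≥ lam * Ψ y) :
    ∀ x₀ : EuclideanSpace ℝ (Fin n), 0 < Ψ x₀ →
      ∃ Tstar > (0 : ℝ), ∀ T : ℝ, 0 < T → T < Tstar →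
        ∀ x : ℝ → EuclideanSpace ℝ (Fin n),
          ContinuousOn x (Set.Ici 0) → x 0 = x₀ →
          (∀ k : ℕ, ∀ t ∈ Set.Icc ((k : ℝ) * T) (((k : ℝ) + 1) * T),
            HasDerivWithinAt x (f (x t) + ∑ j, u j (x ((k : ℝ) * T)) • g j (x t))
              (Set.Icc ((k : ℝ) * T) (((k : ℝ) + 1) * T)) t) →
          ∃ τ ≥ (0 : ℝ), φ (x τ) ≤ 0 ∧ ∀ t ∈ Set.Icc (0 : ℝ) τ, 0 < Ψ (x t) := by
  intro x₀ hx₀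
  set C := ∑ j, max (L j) 0 * Mg j
  have hC : 0 ≤ C := Finset.sum_nonneg fun j _ =>
    mul_nonneg (le_max_right _ _) ((abs_nonneg _).trans (hMg j x₀))
  have hD : 0 ≤ D := (norm_nonneg _).trans (hDbound x₀ x₀)
  have hδ : 0 < lam * Ψ x₀ / 2 := by positivity
  refine ⟨lam * Ψ x₀ / 2 / (C * D + 1), by positivity, fun T hT hTs x hxc hx0 hode => ?_⟩
  have hsol : IsSampledDataSolution (fun y z => f y + ∑ j, u j z • g j y) T x := hode
  have hCDT : C * (D * T) < lam * Ψ x₀ / 2 := by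
    rw [lt_div_iff₀ (by positivity)] at hTs
    nlinarith
  have hrate : ∀ t ≥ 0, ∃ d, HasDerivWithinAt (Ψ ∘ x) d (Ici t) t ∧
      ((Ψ ∘ x) 0 ≤ (Ψ ∘ x) t → 0 ≤ (φ ∘ x) t → lam * Ψ x₀ / 2 < d) := by
    intro t ht
    obtain ⟨d, hd, hbound⟩ := hsol.exists_hasDerivWithinAt_barrier_ge (φ := φ) hT
      (hΨ.differentiable one_ne_zero) hu hMg hDbound hlam.le hguide hx₀.le ht
    refine ⟨d, hd, fun hΨt hφt => ?_⟩
    simp only [Function.comp_apply, hx0] at hΨt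
    linarith [hbound hΨt hφt]
  obtain ⟨τ, hτ, hφτ, hgrowth⟩ := exists_first_nonpos_of_deriv_right_gt hδ
    (hΨ.continuous.comp_continuousOn hxc) (hφ.comp_continuousOn hxc) (fun t => hMΨ (x t)) hrate
  refine ⟨τ, hτ, hφτ, fun t ht => ?_⟩
  have := hgrowth t ht
  simp only [Function.comp_apply, hx0] at this
  nlinarith [ht.1]

/-- Sampled-data preservation of the reach-avoid guarantee under fast sampling
(quantitative form of the paper's Lemma 2): under Lipschitz and boundedness hypotheses
on the dynamics and the controller, and the guidance-barrier condition
`∇Ψ(y)·(f(y) + Σ_j g_j(y)·u_j(y)) ≥ λ·Ψ(y)` whenever `Ψ(y) ≥ 0` and `φ(y) ≥ 0`,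
every point `x₀` with `Ψ(x₀) > 0` admits `T* > 0` such that for every sampling period
`T ∈ (0, T*)`, any zero-order-hold closed-loop trajectory starting at `x₀` reaches a
time `τ ≥ 0` with `φ(x τ) ≤ 0` while keeping `Ψ(x t) > 0` on `[0, τ]`. -/
theorem stmt_13 (n m : ℕ) (lam : ℝ) (hlam : 0 < lam)
    (f : EuclideanSpace ℝ (Fin n) → EuclideanSpace ℝ (Fin n)) (ℓf : ℝ)
    (hf : ∀ y z, ‖f y - f z‖ ≤ ℓf * ‖y - z‖)
    (g : Fin m → EuclideanSpace ℝ (Fin n) → EuclideanSpace ℝ (Fin n)) (ℓg : Fin m → ℝ)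
    (hg : ∀ j y z, ‖g j y - g j z‖ ≤ ℓg j * ‖y - z‖)
    (u : Fin m → EuclideanSpace ℝ (Fin n) → ℝ) (L : Fin m → ℝ)
    (hu : ∀ j y z, |u j y - u j z| ≤ L j * ‖y - z‖)
    (M : Fin m → ℝ) (hM : ∀ j y, |u j y| ≤ M j)
    (hsys : 0 < ℓf + ∑ j, ℓg j * M j)
    (Ψ : EuclideanSpace ℝ (Fin n) → ℝ) (hΨ : ContDiff ℝ 1 Ψ)
    (Mg : Fin m → ℝ) (hMg : ∀ j y, |fderiv ℝ Ψ y (g j y)| ≤ Mg j)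
    (MΨ : ℝ) (hMΨ : ∀ y, Ψ y ≤ MΨ)
    (D : ℝ) (hD : 0 < D)
    (hDbound : ∀ y z, ‖f y + ∑ j, u j z • g j y‖ ≤ D)
    (φ : EuclideanSpace ℝ (Fin n) → ℝ) (hφ : Continuous φ)
    (hguide : ∀ y, 0 ≤ Ψ y → 0 ≤ φ y →
      fderiv ℝ Ψ y (f y + ∑ j, u j y • g j y) ≥ lam * Ψ y) :
    ∀ x₀ : EuclideanSpace ℝ (Fin n), 0 < Ψ x₀ →
      ∃ Tstar > (0 : ℝ), ∀ T : ℝ, 0 < T → T < Tstar →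
        ∀ x : ℝ → EuclideanSpace ℝ (Fin n),
          ContinuousOn x (Set.Ici 0) → x 0 = x₀ →
          (∀ k : ℕ, ∀ t ∈ Set.Icc ((k : ℝ) * T) (((k : ℝ) + 1) * T),
            HasDerivWithinAt x (f (x t) + ∑ j, u j (x ((k : ℝ) * T)) • g j (x t))
              (Set.Icc ((k : ℝ) * T) (((k : ℝ) + 1) * T)) t) →
          ∃ τ ≥ (0 : ℝ), φ (x τ) ≤ 0 ∧ ∀ t ∈ Set.Icc (0 : ℝ) τ, 0 < Ψ (x t) :=
  stmt_13_general n m lam hlam f g u L hu Ψ hΨ Mg hMg MΨ hMΨ D hDbound φ hφ hguide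
end

section
/- Let n, m, N ∈ ℕ with N ≥ 1 and T > 0. Let f, g_1, …, g_m : ℝⁿ → ℝⁿ, let 𝒰 ⊆ ℝ^m, and let X_S, X_RA ⊆ ℝⁿ with X_RA ⊆ X_S. For u = (u_1, …, u_m) ∈ ℝ^m write F(y, u) = f(y) + Σ_{j=1}^m g_j(y)·u_j. Assume the one-step reach-avoid property: for every z ∈ X_RA there exist u ∈ 𝒰 and a continuous y : [0, T] → ℝⁿ with y(0) = z, y differentiable on [0, T] with ẏ(t) = F(y(t), u) for all t ∈ [0, T], y(t) ∈ X_S for all t ∈ [0, T], and y(T) ∈ X_RA. Suppose there exist inputs u_0, …, u_{N−1} ∈ 𝒰, a point x₀ ∈ ℝⁿ, and a continuous x̂ : [0, N·T] → ℝⁿ with x̂(0) = x₀ such that for each i = 0, …, N−1, x̂ is differentiable on [iT, (i+1)T] with ẋ̂(t) = F(x̂(t), u_i) for all t in that interval, x̂(t) ∈ X_S for all t ∈ [0, N·T], and x̂(N·T) ∈ X_RA. Then there exist inputs v_0, …, v_{N−1} ∈ 𝒰 and a continuous x̃ : [0, N·T] → ℝⁿ with x̃(0) = x̂(T) such that for each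 i = 0, …, N−1, x̃ is differentiable on [iT, (i+1)T] with ẋ̃(t) = F(x̃(t), v_i) for all t in that interval, x̃(t) ∈ X_S for all t ∈ [0, N·T], and x̃(N·T) ∈ X_RA. -/
/-- Glue continuity on a union of two closed sets. -/
lemma continuousOn_union_closed {X Y : Type*} [TopologicalSpace X] [TopologicalSpace Y]
    {s t : Set X} {f : X → Y} (hs : IsClosed s) (ht : IsClosed t)
    (hfs : ContinuousOn f s) (hft : ContinuousOn f t) : ContinuousOn f (s ∪ t) := by
  intro x hx
  apply ContinuousWithinAt.union
  · by_cases h : x ∈ s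
    · exact hfs x h
    · exact continuousWithinAt_of_notMem_closure (by rwa [hs.closure_eq])
  · by_cases h : x ∈ t
    · exact hft x h
    · exact continuousWithinAt_of_notMem_closure (by rwa [ht.closure_eq])

set_option maxHeartbeats 1000000 in
/-- Recursive feasibility (shifting) step of the sampled-data reach-avoid MPC
(paper's Theorem 2): assume the one-step reach-avoid property of the terminal set
`X_RA ⊆ X_S` (from every point of `X_RA`, some admissible constant input keeps the
trajectory in `X_S` over one sampling period and returns it to `X_RA`). If the MPC
problem with horizon `N` and sampling period `T` is feasible from `x₀` — i.e. there is
a piecewise-constant admissible input sequence `u_0,…,u_{N−1}` and a trajectory `x̂` of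
`ẋ = f(x) + Σ_j g_j(x)·u_j` staying in `X_S` on `[0, NT]` with `x̂(NT) ∈ X_RA` — then
it is also feasible from the one-step-advanced state `x̂(T)`. -/
theorem stmt_14 (n m N : ℕ) (hN : 1 ≤ N) (T : ℝ) (hT : 0 < T)
    (f : EuclideanSpace ℝ (Fin n) → EuclideanSpace ℝ (Fin n))
    (g : Fin m → EuclideanSpace ℝ (Fin n) → EuclideanSpace ℝ (Fin n))
    (U : Set (Fin m → ℝ))
    (XS XRA : Set (EuclideanSpace ℝ (Fin n))) (hRA : XRA ⊆ XS)
    (honestep : ∀ z ∈ XRA, ∃ u ∈ U, ∃ y : ℝ → EuclideanSpace ℝ (Fin n),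
      ContinuousOn y (Set.Icc 0 T) ∧ y 0 = z ∧
      (∀ t ∈ Set.Icc (0 : ℝ) T,
        HasDerivWithinAt y (f (y t) + ∑ j, u j • g j (y t)) (Set.Icc (0 : ℝ) T) t) ∧
      (∀ t ∈ Set.Icc (0 : ℝ) T, y t ∈ XS) ∧ y T ∈ XRA)
    (u : Fin N → (Fin m → ℝ)) (hu : ∀ i, u i ∈ U)
    (x₀ : EuclideanSpace ℝ (Fin n))
    (xhat : ℝ → EuclideanSpace ℝ (Fin n))
    (hxcont : ContinuousOn xhat (Set.Icc 0 ((N : ℝ) * T)))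
    (hx0 : xhat 0 = x₀)
    (hxode : ∀ i : Fin N, ∀ t ∈ Set.Icc ((i : ℝ) * T) (((i : ℝ) + 1) * T),
      HasDerivWithinAt xhat (f (xhat t) + ∑ j, u i j • g j (xhat t))
        (Set.Icc ((i : ℝ) * T) (((i : ℝ) + 1) * T)) t)
    (hxsafe : ∀ t ∈ Set.Icc (0 : ℝ) ((N : ℝ) * T), xhat t ∈ XS)
    (hxterm : xhat ((N : ℝ) * T) ∈ XRA) :
    ∃ v : Fin N → (Fin m → ℝ), (∀ i, v i ∈ U) ∧
      ∃ xtil : ℝ → EuclideanSpace ℝ (Fin n),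
        ContinuousOn xtil (Set.Icc 0 ((N : ℝ) * T)) ∧
        xtil 0 = xhat T ∧
        (∀ i : Fin N, ∀ t ∈ Set.Icc ((i : ℝ) * T) (((i : ℝ) + 1) * T),
          HasDerivWithinAt xtil (f (xtil t) + ∑ j, v i j • g j (xtil t))
            (Set.Icc ((i : ℝ) * T) (((i : ℝ) + 1) * T)) t) ∧
        (∀ t ∈ Set.Icc (0 : ℝ) ((N : ℝ) * T), xtil t ∈ XS) ∧
        xtil ((N : ℝ) * T) ∈ XRA := by
  obtain ⟨us, husU, y, hycont, hy0, hyode, hysafe, hyterm⟩ := honestep _ hxterm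
  set c : ℝ := ((N : ℝ) - 1) * T with hc
  have hc0 : (0 : ℝ) ≤ c := by
    have : (1 : ℝ) ≤ (N : ℝ) := by exact_mod_cast hN
    have : (0 : ℝ) ≤ (N : ℝ) - 1 := by linarith
    positivity
  have hcT : c + T = (N : ℝ) * T := by ring
  have hcN : c ≤ (N : ℝ) * T := by nlinarith
  set xtil : ℝ → EuclideanSpace ℝ (Fin n) :=
    fun t => if t ≤ c then xhat (t + T) else y (t - c) with hxtil
  have key1 : ∀ t ∈ Set.Icc (0 : ℝ) c, xtil t = xhat (t + T) := by
    intro t ht; exact if_pos ht.2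
  have key2 : ∀ t ∈ Set.Icc c ((N : ℝ) * T), xtil t = y (t - c) := by
    intro t ht
    by_cases h : t ≤ c
    · have htc : t = c := le_antisymm h ht.1
      simp only [hxtil, if_pos h, htc, sub_self, hy0, hcT]
      rw [if_pos le_rfl]
    · exact if_neg h
  set v : Fin N → (Fin m → ℝ) :=
    fun i => if h : (i : ℕ) + 1 < N then u ⟨(i : ℕ) + 1, h⟩ else us with hv
  refine ⟨v, fun i => ?_, xtil, ?_, ?_, ?_, ?_, ?_⟩
  · by_cases h : (i : ℕ) + 1 < N
    · simp only [hv, dif_pos h]; exact hu _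
    · simp only [hv, dif_neg h]; exact husU
  · -- continuity
    have hsplit : Set.Icc (0 : ℝ) ((N : ℝ) * T) = Set.Icc 0 c ∪ Set.Icc c ((N : ℝ) * T) :=
      (Set.Icc_union_Icc_eq_Icc hc0 hcN).symm
    rw [hsplit]
    apply continuousOn_union_closed isClosed_Icc isClosed_Icc
    · apply ContinuousOn.congr (f := fun t => xhat (t + T)) _ key1
      apply hxcont.comp (by fun_prop)
      intro t ht
      simp only [Set.mem_Icc] at ht ⊢
      exact ⟨by linarith [hT.le], by linarith⟩
    · apply ContinuousOn.congr (f := fun t => y (t - c)) _ key2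
      apply hycont.comp (by fun_prop)
      intro t ht
      simp only [Set.mem_Icc] at ht ⊢
      exact ⟨by linarith, by linarith⟩
  · -- initial condition
    rw [key1 0 ⟨le_refl 0, hc0⟩, zero_add]
  · -- ODE
    intro i t ht
    by_cases h : (i : ℕ) + 1 < N
    · -- shifted piece
      have hiN : ((i : ℕ) : ℝ) + 1 ≤ (N : ℝ) - 1 := by
        have : (i : ℕ) + 2 ≤ N := h
        have : ((i : ℕ) : ℝ) + 2 ≤ (N : ℝ) := by exact_mod_cast this
        linarith
      have hsub : Set.Icc ((i : ℝ) * T) (((i : ℝ) + 1) * T) ⊆ Set.Icc 0 c := by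
        intro s hs
        simp only [Set.mem_Icc] at hs ⊢
        refine ⟨le_trans (by positivity) hs.1, le_trans hs.2 ?_⟩
        rw [hc]
        nlinarith [mul_nonneg (by linarith : (0:ℝ) ≤ (N:ℝ) - 1 - (((i:ℕ):ℝ) + 1)) hT.le]
      have heqOn : ∀ s ∈ Set.Icc ((i : ℝ) * T) (((i : ℝ) + 1) * T),
          xtil s = xhat (s + T) := fun s hs => key1 s (hsub hs)
      have heqt : xtil t = xhat (t + T) := heqOn t ht
      have hvt : v i = u ⟨(i : ℕ) + 1, h⟩ := dif_pos h
      rw [heqt, hvt]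
      have hshift : HasDerivWithinAt (fun s => s + T) 1
          (Set.Icc ((i : ℝ) * T) (((i : ℝ) + 1) * T)) t :=
        (hasDerivWithinAt_id t _).add_const T
      have hjcast : ((⟨(i : ℕ) + 1, h⟩ : Fin N) : ℝ) = (i : ℝ) + 1 := by push_cast; ring
      have hmem : t + T ∈ Set.Icc (((i : ℝ) + 1) * T) (((i : ℝ) + 1 + 1) * T) := by
        simp only [Set.mem_Icc] at ht ⊢
        constructor
        · nlinarith [ht.1]
        · nlinarith [ht.2]
      have hxd := hxode ⟨(i : ℕ) + 1, h⟩ (t + T) (by rw [hjcast]; exact hmem)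
      rw [hjcast] at hxd
      have hmaps : Set.MapsTo (fun s => s + T)
          (Set.Icc ((i : ℝ) * T) (((i : ℝ) + 1) * T))
          (Set.Icc (((i : ℝ) + 1) * T) (((i : ℝ) + 1 + 1) * T)) := by
        intro s hs
        simp only [Set.mem_Icc] at hs ⊢
        constructor
        · nlinarith [hs.1]
        · nlinarith [hs.2]
      have := hxd.scomp t hshift hmaps
      rw [one_smul] at this
      exact this.congr heqOn heqt
    · -- last piece, given by y
      have hiN : (i : ℕ) + 1 = N := le_antisymm i.isLt (not_lt.mp h)
      have hiR : ((i : ℕ) : ℝ) = (N : ℝ) - 1 := by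
        have : ((i : ℕ) : ℝ) + 1 = (N : ℝ) := by exact_mod_cast hiN
        linarith
      rw [hiR] at ht ⊢
      have hI : ((N : ℝ) - 1) * T = c := rfl
      have hI2 : ((N : ℝ) - 1 + 1) * T = (N : ℝ) * T := by ring
      rw [hI, hI2] at ht ⊢
      have heqOn : ∀ s ∈ Set.Icc c ((N : ℝ) * T), xtil s = y (s - c) := key2
      have heqt : xtil t = y (t - c) := heqOn t ht
      have hvt : v i = us := dif_neg h
      rw [heqt, hvt]
      have hshift : HasDerivWithinAt (fun s => s - c) 1 (Set.Icc c ((N : ℝ) * T)) t :=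
        (hasDerivWithinAt_id t _).sub_const c
      have hmem : t - c ∈ Set.Icc (0 : ℝ) T := by
        simp only [Set.mem_Icc] at ht ⊢
        exact ⟨by linarith [ht.1], by linarith [ht.2]⟩
      have hyd := hyode (t - c) hmem
      have hmaps : Set.MapsTo (fun s => s - c) (Set.Icc c ((N : ℝ) * T))
          (Set.Icc (0 : ℝ) T) := by
        intro s hs
        simp only [Set.mem_Icc] at hs ⊢
        exact ⟨by linarith [hs.1], by linarith [hs.2]⟩
      have := hyd.scomp t hshift hmaps
      rw [one_smul] at this
      exact this.congr heqOn heqt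
  · -- safety
    intro t ht
    by_cases h : t ≤ c
    · rw [key1 t ⟨ht.1, h⟩]
      apply hxsafe
      constructor
      · linarith [ht.1, hT.le]
      · linarith
    · rw [key2 t ⟨le_of_not_ge h, ht.2⟩]
      apply hysafe
      constructor
      · linarith [not_le.mp h]
      · have := ht.2; linarith
  · -- terminal
    rw [key2 ((N : ℝ) * T) ⟨hcN, le_refl _⟩]
    have : (N : ℝ) * T - c = T := by rw [hc]; ring
    rw [this]
    exact hyterm
end
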